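/- arXiv:2211.16695 — 7 statements merged into one kernel-verified Lean document; each statement's English description precedes it below -/
import Mathlib

section
/- Let Q_g : S² → ℝ be integrable with ⟨Q_g⟩ = 0 and ⟨Ω Q_g⟩ = 0 ∈ ℝ³, let ρ_g ∈ ℝ, R_g ∈ ℝ³, and assume ∫_{ν₋}^{ν₊} ω₁ dν = Δν and ∫_{ν₋}^{ν₊} ω₂ dν = Δν. Let I_rec(Ω, ν) be the decomposed reconstruction with r = Ω·R_g and q = Q_g(Ω). Then the reconstruction reproduces the group angular moments exactly: (1/(4π)) ∫_{S²} ∫_{ν₋}^{ν₊} I_rec(Ω, ν) dν dσ(Ω) = ρ_g, and (3/(4π)) ∫_{S²} ∫_{ν₋}^{ν₊} Ω · I_rec(Ω, ν) dν dσ(Ω) = R_g (componentwise). -/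
open MeasureTheory Real

/-- The surface measure on the unit sphere `S² ⊂ ℝ³`. -/
noncomputable def sphereMeasure :
    Measure (Metric.sphere (0 : EuclideanSpace ℝ (Fin 3)) 1) :=
  (volume : Measure (EuclideanSpace ℝ (Fin 3))).toSphere

/-!
Over the frequency group both source corrections integrate to zero: `∫ s_ρ = Δν B_g − B_g ∫ ω₂ = 0`
and `∫ s_R = (Δν − Δν)(Ω·R_g) = 0`, while `∫ ω₁ = Δν`, so `∫ I_rec dν = ρ_g + Ω·R_g + Q_g(Ω)`.
On the sphere, invariance of the surface measure under coordinate reflections and permutations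
gives `∫ Ω_i = 0` and `∫ Ω_i Ω_j = δ_ij |S²| / 3` with `|S²| = 4π`; the vanishing moments of `Q_g`
then leave exactly `ρ_g` and `R_g`.
-/

open Metric Set
open scoped Pointwise

namespace LinearIsometryEquiv

variable {E : Type*} [NormedAddCommGroup E] [NormedSpace ℝ E] [MeasurableSpace E] [BorelSpace E]

noncomputable def sphereEquiv (e : E ≃ₗᵢ[ℝ] E) : sphere (0 : E) 1 ≃ᵐ sphere (0 : E) 1 :=
  (e.toHomeomorph.subtype fun x => by simp).toMeasurableEquiv

@[simp]
lemma coe_sphereEquiv_apply (e : E ≃ₗᵢ[ℝ] E) (x : sphere (0 : E) 1) :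
    (e.sphereEquiv x : E) = e x := rfl

lemma measurePreserving_sphereEquiv {μ : Measure E} (e : E ≃ₗᵢ[ℝ] E)
    (he : MeasurePreserving e μ μ) :
    MeasurePreserving e.sphereEquiv μ.toSphere μ.toSphere := by
  refine ⟨e.sphereEquiv.measurable, Measure.ext fun s hs => ?_⟩
  rw [MeasurableEquiv.map_apply, μ.toSphere_apply' hs,
    μ.toSphere_apply' (e.sphereEquiv.measurable hs)]
  have hval : ((↑) '' (e.sphereEquiv ⁻¹' s) : Set E) = e ⁻¹' ((↑) '' s) := by
    ext x
    constructor
    · rintro ⟨y, hy, rfl⟩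
      exact ⟨_, hy, rfl⟩
    · rintro ⟨y, hy, hxy⟩
      have hx : x ∈ sphere (0 : E) 1 := by
        rw [mem_sphere_zero_iff_norm, ← e.norm_map, ← hxy]
        exact mem_sphere_zero_iff_norm.1 y.2
      refine ⟨⟨x, hx⟩, ?_, rfl⟩
      rwa [mem_preimage, show e.sphereEquiv ⟨x, hx⟩ = y from Subtype.ext hxy.symm]
  have hsmul : Ioo (0 : ℝ) 1 • e ⁻¹' ((↑) '' s) = e ⁻¹' (Ioo (0 : ℝ) 1 • ((↑) '' s)) := by
    ext x
    simp only [mem_smul, mem_preimage]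
    constructor
    · rintro ⟨c, hc, y, hy, rfl⟩
      exact ⟨c, hc, e y, hy, by simp⟩
    · rintro ⟨c, hc, y, hy, hx⟩
      exact ⟨c, hc, e.symm y, by simpa using hy, e.injective (by simp [hx])⟩
  rw [hval, hsmul, he.measure_preimage_emb e.toHomeomorph.measurableEmbedding]

end LinearIsometryEquiv

section SphereMoments

variable {ι : Type*} [Fintype ι] {ν : Measure (sphere (0 : EuclideanSpace ℝ ι) 1)}

local notation "𝔼" => EuclideanSpace ℝ ι

lemma continuous_sphere_coord (i : ι) : Continuous fun x : sphere (0 : 𝔼) 1 => (x : 𝔼) i :=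
  (continuous_apply i).comp (PiLp.continuous_ofLp 2 _ |>.comp continuous_subtype_val)

lemma norm_sphere_coord_le_one (x : sphere (0 : 𝔼) 1) (i : ι) : ‖(x : 𝔼) i‖ ≤ 1 :=
  (PiLp.norm_apply_le _ i).trans (norm_eq_of_mem_sphere x).le

lemma sum_sphere_coord_sq (x : sphere (0 : 𝔼) 1) : ∑ j, (x : 𝔼) j ^ 2 = 1 := by
  simpa [norm_eq_of_mem_sphere x] using (EuclideanSpace.real_norm_sq_eq (x : 𝔼)).symm

noncomputable def EuclideanSpace.coordReflection [DecidableEq ι] (i : ι) : 𝔼 ≃ₗᵢ[ℝ] 𝔼 :=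
  LinearIsometryEquiv.piLpCongrRight 2 fun j =>
    if j = i then LinearIsometryEquiv.neg ℝ else LinearIsometryEquiv.refl ℝ ℝ

lemma EuclideanSpace.coordReflection_apply [DecidableEq ι] (i j : ι) (x : 𝔼) :
    coordReflection i x j = if j = i then -x j else x j := by
  unfold EuclideanSpace.coordReflection
  split_ifs with h <;> simp [h]

lemma integrable_sphere_coord_mul_coord [IsFiniteMeasure ν] (i j : ι) :
    Integrable (fun x : sphere (0 : 𝔼) 1 => (x : 𝔼) i * (x : 𝔼) j) ν :=
  ((continuous_sphere_coord i).mul (continuous_sphere_coord j)).integrable_of_hasCompactSupport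
    (.of_compactSpace _)

lemma integrable_sphere_coord [IsFiniteMeasure ν] (i : ι) :
    Integrable (fun x : sphere (0 : 𝔼) 1 => (x : 𝔼) i) ν :=
  (continuous_sphere_coord i).integrable_of_hasCompactSupport (.of_compactSpace _)

variable (hν : ∀ e : EuclideanSpace ℝ ι ≃ₗᵢ[ℝ] EuclideanSpace ℝ ι,
    MeasurePreserving e.sphereEquiv ν ν)
include hν

lemma integral_eq_zero_of_comp_sphereEquiv_eq_neg (e : 𝔼 ≃ₗᵢ[ℝ] 𝔼)
    {f : sphere (0 : 𝔼) 1 → ℝ} (hf : ∀ x, f (e.sphereEquiv x) = -f x) : ∫ x, f x ∂ν = 0 := by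
  have h := (hν e).integral_comp' f
  simp only [hf, integral_neg] at h
  linarith

lemma integral_sphere_coord (i : ι) : ∫ x, (x : 𝔼) i ∂ν = 0 := by
  classical
  exact integral_eq_zero_of_comp_sphereEquiv_eq_neg hν (EuclideanSpace.coordReflection i)
    fun x => by simp [EuclideanSpace.coordReflection_apply]

lemma integral_sphere_coord_mul_coord_of_ne {i j : ι} (hij : i ≠ j) :
    ∫ x, (x : 𝔼) i * (x : 𝔼) j ∂ν = 0 := by
  classical
  exact integral_eq_zero_of_comp_sphereEquiv_eq_neg hν (EuclideanSpace.coordReflection i)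
    fun x => by simp [EuclideanSpace.coordReflection_apply, hij.symm]

lemma integral_sphere_coord_sq_eq (i j : ι) :
    ∫ x, (x : 𝔼) i ^ 2 ∂ν = ∫ x, (x : 𝔼) j ^ 2 ∂ν := by
  classical
  rw [← (hν (LinearIsometryEquiv.piLpCongrLeft 2 ℝ ℝ (Equiv.swap i j))).integral_comp']
  simp [LinearIsometryEquiv.piLpCongrLeft_apply]

variable [IsFiniteMeasure ν]

lemma integral_sphere_coord_sq (i : ι) :
    ∫ x, (x : 𝔼) i ^ 2 ∂ν = ν.real univ / Fintype.card ι := by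
  have hsum : ∑ j, ∫ x, (x : 𝔼) j ^ 2 ∂ν = ν.real univ := by
    rw [← integral_finsetSum _ fun j _ => by
      simpa [sq] using integrable_sphere_coord_mul_coord j j]
    simp [sum_sphere_coord_sq]
  simp only [integral_sphere_coord_sq_eq hν _ i, Finset.sum_const, Finset.card_univ,
    nsmul_eq_mul] at hsum
  have hcard : (Fintype.card ι : ℝ) ≠ 0 := Nat.cast_ne_zero.2 (Fintype.card_pos_iff.2 ⟨i⟩).ne'
  rw [eq_div_iff hcard, mul_comm, hsum]

lemma integral_sphere_coord_mul_coord [DecidableEq ι] (i j : ι) :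
    ∫ x, (x : 𝔼) i * (x : 𝔼) j ∂ν = if i = j then ν.real univ / Fintype.card ι else 0 := by
  split_ifs with hij
  · subst hij
    simpa [sq] using integral_sphere_coord_sq hν i
  · exact integral_sphere_coord_mul_coord_of_ne hν hij

lemma integral_sphere_const_add_linear_add (c : ℝ) (R : ι → ℝ) {q : sphere (0 : 𝔼) 1 → ℝ}
    (hq : Integrable q ν) (hq₀ : ∫ x, q x ∂ν = 0) :
    ∫ x, (c + ∑ j, (x : 𝔼) j * R j + q x) ∂ν = ν.real univ * c := by
  have hlin : Integrable (fun x : sphere (0 : 𝔼) 1 => ∑ j, (x : 𝔼) j * R j) ν :=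
    integrable_finsetSum _ fun j _ => (integrable_sphere_coord j).mul_const _
  have haff : Integrable (fun x : sphere (0 : 𝔼) 1 => c + ∑ j, (x : 𝔼) j * R j) ν :=
    (integrable_const c).add hlin
  rw [integral_add haff hq, integral_add (integrable_const c) hlin,
    integral_finsetSum _ fun j _ => (integrable_sphere_coord j).mul_const _]
  simp [integral_mul_const, integral_sphere_coord hν, hq₀]

lemma integral_sphere_coord_mul_const_add_linear_add (i : ι) (c : ℝ) (R : ι → ℝ)
    {q : sphere (0 : 𝔼) 1 → ℝ} (hq : Integrable q ν) (hqi : ∫ x, (x : 𝔼) i * q x ∂ν = 0) :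
    ∫ x, (x : 𝔼) i * (c + ∑ j, (x : 𝔼) j * R j + q x) ∂ν =
      ν.real univ / Fintype.card ι * R i := by
  classical
  have hexpand : ∀ x : sphere (0 : 𝔼) 1, (x : 𝔼) i * (c + ∑ j, (x : 𝔼) j * R j + q x) =
      (x : 𝔼) i * c + ∑ j, (x : 𝔼) i * (x : 𝔼) j * R j + (x : 𝔼) i * q x := fun x => by
    simp only [mul_add, Finset.mul_sum, mul_assoc]
  have hquad : Integrable (fun x : sphere (0 : 𝔼) 1 => ∑ j, (x : 𝔼) i * (x : 𝔼) j * R j) ν :=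
    integrable_finsetSum _ fun j _ => (integrable_sphere_coord_mul_coord i j).mul_const _
  have hqi_int : Integrable (fun x : sphere (0 : 𝔼) 1 => (x : 𝔼) i * q x) ν :=
    hq.bdd_mul (continuous_sphere_coord i).aestronglyMeasurable
      (.of_forall fun x => norm_sphere_coord_le_one x i)
  have haff : Integrable
      (fun x : sphere (0 : 𝔼) 1 => (x : 𝔼) i * c + ∑ j, (x : 𝔼) i * (x : 𝔼) j * R j) ν :=
    ((integrable_sphere_coord i).mul_const c).add hquad
  simp_rw [hexpand]
  rw [integral_add haff hqi_int,
    integral_add ((integrable_sphere_coord i).mul_const c) hquad,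
    integral_finsetSum _ fun j _ => (integrable_sphere_coord_mul_coord i j).mul_const _]
  simp [integral_mul_const, integral_sphere_coord hν, integral_sphere_coord_mul_coord hν, hqi]

end SphereMoments

lemma measurePreserving_sphereMeasure
    (e : EuclideanSpace ℝ (Fin 3) ≃ₗᵢ[ℝ] EuclideanSpace ℝ (Fin 3)) :
    MeasurePreserving e.sphereEquiv sphereMeasure sphereMeasure :=
  e.measurePreserving_sphereEquiv e.measurePreserving

instance : IsFiniteMeasure sphereMeasure := by
  unfold sphereMeasure
  infer_instance

lemma sphereMeasure_real_univ : sphereMeasure.real univ = 4 * π := by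
  rw [sphereMeasure, Measure.toSphere_real_apply_univ, measureReal_def,
    EuclideanSpace.volume_ball_fin_three]
  simp [ENNReal.toReal_ofReal (by positivity : 0 ≤ π * 4 / 3)]
  ring

namespace intervalIntegral

variable {a b : ℝ}

theorem integral_const_mul_sub_mul_integral_eq_zero {f g : ℝ → ℝ}
    (hf : IntervalIntegrable f volume a b) (hg : IntervalIntegrable g volume a b) {c : ℝ}
    (hgc : ∫ x in a..b, g x = c) :
    ∫ x in a..b, (c * f x - g x * ∫ y in a..b, f y) = 0 := by
  rw [integral_sub (hf.const_mul c) (hg.mul_const _), integral_const_mul, integral_mul_const, hgc,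
    sub_self]

theorem integral_mul_div_integral_sub_one_eq_zero {κ : ℝ → ℝ} (hK : ∫ x in a..b, κ x ≠ 0) :
    ∫ x in a..b, ((b - a) * κ x / ∫ y in a..b, κ y) - 1 = 0 := by
  have hκ := intervalIntegrable_of_integral_ne_zero hK
  rw [integral_sub ((hκ.const_mul _).div_const _) intervalIntegrable_const, integral_div,
    integral_const_mul, integral_const, mul_div_assoc, div_self hK]
  simp

theorem integral_inv_mul_reconstruction (hab : a ≠ b) {ω s t : ℝ → ℝ}
    (hω : IntervalIntegrable ω volume a b) (hs : IntervalIntegrable s volume a b)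
    (ht : IntervalIntegrable t volume a b) (hω₁ : ∫ x in a..b, ω x = b - a)
    (hs₀ : ∫ x in a..b, s x = 0) (ht₀ : ∫ x in a..b, t x = 0) (ρ r q : ℝ) :
    ∫ x in a..b, (b - a)⁻¹ * (ω x * ρ + r + q + s x + t x) = ρ + r + q := by
  have hω' : IntervalIntegrable (fun x => ω x * ρ + r + q) volume a b :=
    (hω.mul_const ρ).add intervalIntegrable_const |>.add intervalIntegrable_const
  rw [integral_const_mul, integral_add (hω'.add hs) ht, integral_add hω' hs,
    integral_add ((hω.mul_const ρ).add intervalIntegrable_const) intervalIntegrable_const,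
    integral_add (hω.mul_const ρ) intervalIntegrable_const, integral_mul_const, hω₁, hs₀, ht₀,
    integral_const, integral_const]
  field_simp [sub_ne_zero.2 hab.symm]
  ring

end intervalIntegral

theorem reconstruction_reproduces_angular_moments_general
    (ν₁ ν₂ : ℝ) (hν : ν₁ < ν₂)
    (B ω₁ ω₂ κ : ℝ → ℝ)
    (hB : IntervalIntegrable B volume ν₁ ν₂)
    (hω₁int : IntervalIntegrable ω₁ volume ν₁ ν₂)
    (hω₂int : IntervalIntegrable ω₂ volume ν₁ ν₂)
    (hκint : IntervalIntegrable κ volume ν₁ ν₂)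
    (hKpos : 0 < ∫ ν in ν₁..ν₂, κ ν)
    (hω₁ : (∫ ν in ν₁..ν₂, ω₁ ν) = ν₂ - ν₁)
    (hω₂ : (∫ ν in ν₁..ν₂, ω₂ ν) = ν₂ - ν₁)
    (ρg : ℝ) (Rg : Fin 3 → ℝ)
    (Qg : Metric.sphere (0 : EuclideanSpace ℝ (Fin 3)) 1 → ℝ)
    (hQgInt : Integrable Qg sphereMeasure)
    (hQg0 : (4 * π)⁻¹ * ∫ Ω, Qg Ω ∂sphereMeasure = 0)
    (hQg1 : ∀ i : Fin 3, (4 * π)⁻¹ *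
      ∫ Ω : Metric.sphere (0 : EuclideanSpace ℝ (Fin 3)) 1,
        (Ω : EuclideanSpace ℝ (Fin 3)) i * Qg Ω ∂sphereMeasure = 0)
    (sρ : ℝ → ℝ)
    (hsρ : ∀ ν, sρ ν = (ν₂ - ν₁) * B ν - ω₂ ν * (∫ ν' in ν₁..ν₂, B ν'))
    (sR : Metric.sphere (0 : EuclideanSpace ℝ (Fin 3)) 1 → ℝ → ℝ)
    (hsR : ∀ Ω ν, sR Ω ν = ((ν₂ - ν₁) * κ ν / (∫ ν' in ν₁..ν₂, κ ν') - 1) *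
      (∑ i : Fin 3, (Ω : EuclideanSpace ℝ (Fin 3)) i * Rg i))
    (Irec : Metric.sphere (0 : EuclideanSpace ℝ (Fin 3)) 1 → ℝ → ℝ)
    (hIrec : ∀ Ω ν, Irec Ω ν = (ν₂ - ν₁)⁻¹ *
      (ω₁ ν * ρg + (∑ i : Fin 3, (Ω : EuclideanSpace ℝ (Fin 3)) i * Rg i) + Qg Ω
        + sρ ν + sR Ω ν)) :
    ((4 * π)⁻¹ * ∫ Ω, (∫ ν in ν₁..ν₂, Irec Ω ν) ∂sphereMeasure = ρg) ∧
    (∀ i : Fin 3, 3 * ((4 * π)⁻¹ *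
      ∫ Ω : Metric.sphere (0 : EuclideanSpace ℝ (Fin 3)) 1,
        (Ω : EuclideanSpace ℝ (Fin 3)) i * (∫ ν in ν₁..ν₂, Irec Ω ν) ∂sphereMeasure)
      = Rg i) := by
  have hfrequency (Ω : sphere (0 : EuclideanSpace ℝ (Fin 3)) 1) :
      ∫ ν in ν₁..ν₂, Irec Ω ν = ρg + ∑ i, (Ω : EuclideanSpace ℝ (Fin 3)) i * Rg i + Qg Ω := by
    simp only [hIrec, hsρ, hsR]
    exact intervalIntegral.integral_inv_mul_reconstruction hν.ne hω₁int
      ((hB.const_mul _).sub (hω₂int.mul_const _))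
      ((((hκint.const_mul _).div_const _).sub intervalIntegrable_const).mul_const _) hω₁
      (intervalIntegral.integral_const_mul_sub_mul_integral_eq_zero hB hω₂int hω₂)
      (by rw [intervalIntegral.integral_mul_const,
        intervalIntegral.integral_mul_div_integral_sub_one_eq_zero hKpos.ne', zero_mul]) ρg _ _
  have hπ : (4 * π)⁻¹ ≠ 0 := by positivity
  simp only [hfrequency]
  refine ⟨?_, fun i => ?_⟩
  · rw [integral_sphere_const_add_linear_add measurePreserving_sphereMeasure _ _ hQgInt
      ((mul_eq_zero.1 hQg0).resolve_left hπ), sphereMeasure_real_univ]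
    field_simp
  · rw [integral_sphere_coord_mul_const_add_linear_add measurePreserving_sphereMeasure _ _ _
      hQgInt ((mul_eq_zero.1 (hQg1 i)).resolve_left hπ), sphereMeasure_real_univ,
      Fintype.card_fin, Nat.cast_ofNat]
    field_simp

/-- The decomposed multi-group reconstruction reproduces the group angular moments
exactly: `(1/4π) ∬ I_rec = ρ_g` and `(3/4π) ∬ Ω I_rec = R_g` componentwise. -/
theorem reconstruction_reproduces_angular_moments
    (ν₁ ν₂ : ℝ) (hν₀ : 0 ≤ ν₁) (hν : ν₁ < ν₂)
    (B ω₁ ω₂ κ : ℝ → ℝ)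
    (hB : IntervalIntegrable B volume ν₁ ν₂)
    (hω₁int : IntervalIntegrable ω₁ volume ν₁ ν₂)
    (hω₂int : IntervalIntegrable ω₂ volume ν₁ ν₂)
    (hκint : IntervalIntegrable κ volume ν₁ ν₂)
    (hκpos : ∀ ν ∈ Set.Icc ν₁ ν₂, 0 < κ ν)
    (hKpos : 0 < ∫ ν in ν₁..ν₂, κ ν)
    (hω₁ : (∫ ν in ν₁..ν₂, ω₁ ν) = ν₂ - ν₁)
    (hω₂ : (∫ ν in ν₁..ν₂, ω₂ ν) = ν₂ - ν₁)
    (ρg : ℝ) (Rg : Fin 3 → ℝ)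
    (Qg : Metric.sphere (0 : EuclideanSpace ℝ (Fin 3)) 1 → ℝ)
    (hQgInt : Integrable Qg sphereMeasure)
    (hQg0 : (4 * π)⁻¹ * ∫ Ω, Qg Ω ∂sphereMeasure = 0)
    (hQg1 : ∀ i : Fin 3, (4 * π)⁻¹ *
      ∫ Ω : Metric.sphere (0 : EuclideanSpace ℝ (Fin 3)) 1,
        (Ω : EuclideanSpace ℝ (Fin 3)) i * Qg Ω ∂sphereMeasure = 0)
    (sρ : ℝ → ℝ)
    (hsρ : ∀ ν, sρ ν = (ν₂ - ν₁) * B ν - ω₂ ν * (∫ ν' in ν₁..ν₂, B ν'))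
    (sR : Metric.sphere (0 : EuclideanSpace ℝ (Fin 3)) 1 → ℝ → ℝ)
    (hsR : ∀ Ω ν, sR Ω ν = ((ν₂ - ν₁) * κ ν / (∫ ν' in ν₁..ν₂, κ ν') - 1) *
      (∑ i : Fin 3, (Ω : EuclideanSpace ℝ (Fin 3)) i * Rg i))
    (Irec : Metric.sphere (0 : EuclideanSpace ℝ (Fin 3)) 1 → ℝ → ℝ)
    (hIrec : ∀ Ω ν, Irec Ω ν = (ν₂ - ν₁)⁻¹ *
      (ω₁ ν * ρg + (∑ i : Fin 3, (Ω : EuclideanSpace ℝ (Fin 3)) i * Rg i) + Qg Ω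
        + sρ ν + sR Ω ν)) :
    ((4 * π)⁻¹ * ∫ Ω, (∫ ν in ν₁..ν₂, Irec Ω ν) ∂sphereMeasure = ρg) ∧
    (∀ i : Fin 3, 3 * ((4 * π)⁻¹ *
      ∫ Ω : Metric.sphere (0 : EuclideanSpace ℝ (Fin 3)) 1,
        (Ω : EuclideanSpace ℝ (Fin 3)) i * (∫ ν in ν₁..ν₂, Irec Ω ν) ∂sphereMeasure)
      = Rg i) :=
  reconstruction_reproduces_angular_moments_general ν₁ ν₂ hν B ω₁ ω₂ κ hB hω₁int hω₂int hκint hKpos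
    hω₁ hω₂ ρg Rg Qg hQgInt hQg0 hQg1 sρ hsρ sR hsR Irec hIrec
end

section
/- Let σ_a : [ν₋, ν₊] → [0, ∞) be measurable such that σ_a, σ_a ω₁, σ_a ω₂, σ_a B and σ_a κ are integrable on [ν₋, ν₊]. Define the group coefficients σ¹_{a,g} := (1/Δν) ∫ ω₁ σ_a dν, σ²_{a,g} := (1/Δν) ∫ ω₂ σ_a dν, σ_{a,g} := (1/Δν) ∫ σ_a dν. Then the group absorption term of the decomposed reconstruction evaluates exactly to ∫_{ν₋}^{ν₊} σ_a(ν) (B(ν) − I_rec(ν)) dν = σ²_{a,g} B_g − σ¹_{a,g} ρ_g − σ_{a,g} q − ( ∫_{ν₋}^{ν₊} σ_a κ dν / K ) · r. -/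
open MeasureTheory

/-- The group absorption term of the decomposed reconstruction evaluates exactly to
`∫ σ_a (B − I_rec) dν = σ²_{a,g} B_g − σ¹_{a,g} ρ_g − σ_{a,g} q − (∫ σ_a κ / K) r`. -/
theorem group_absorption_term_eval
    (ν₁ ν₂ : ℝ) (hν₀ : 0 ≤ ν₁) (hν : ν₁ < ν₂)
    (B ω₁ ω₂ κ : ℝ → ℝ)
    (hB : IntervalIntegrable B volume ν₁ ν₂)
    (hω₁int : IntervalIntegrable ω₁ volume ν₁ ν₂)
    (hω₂int : IntervalIntegrable ω₂ volume ν₁ ν₂)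
    (hκint : IntervalIntegrable κ volume ν₁ ν₂)
    (hκpos : ∀ ν ∈ Set.Icc ν₁ ν₂, 0 < κ ν)
    (hKpos : 0 < ∫ ν in ν₁..ν₂, κ ν)
    (ρg r q : ℝ)
    (σa : ℝ → ℝ) (hσaMeas : Measurable σa) (hσaNonneg : ∀ ν, 0 ≤ σa ν)
    (hσaInt : IntervalIntegrable σa volume ν₁ ν₂)
    (hσaω₁ : IntervalIntegrable (fun ν => σa ν * ω₁ ν) volume ν₁ ν₂)
    (hσaω₂ : IntervalIntegrable (fun ν => σa ν * ω₂ ν) volume ν₁ ν₂)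
    (hσaB : IntervalIntegrable (fun ν => σa ν * B ν) volume ν₁ ν₂)
    (hσaκ : IntervalIntegrable (fun ν => σa ν * κ ν) volume ν₁ ν₂)
    (sρ sR Irec : ℝ → ℝ)
    (hsρ : ∀ ν, sρ ν = (ν₂ - ν₁) * B ν - ω₂ ν * (∫ ν' in ν₁..ν₂, B ν'))
    (hsR : ∀ ν, sR ν = ((ν₂ - ν₁) * κ ν / (∫ ν' in ν₁..ν₂, κ ν') - 1) * r)
    (hIrec : ∀ ν, Irec ν = (ν₂ - ν₁)⁻¹ * (ω₁ ν * ρg + r + q + sρ ν + sR ν)) :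
    (∫ ν in ν₁..ν₂, σa ν * (B ν - Irec ν))
      = ((ν₂ - ν₁)⁻¹ * ∫ ν in ν₁..ν₂, ω₂ ν * σa ν) * (∫ ν in ν₁..ν₂, B ν)
        - ((ν₂ - ν₁)⁻¹ * ∫ ν in ν₁..ν₂, ω₁ ν * σa ν) * ρg
        - ((ν₂ - ν₁)⁻¹ * ∫ ν in ν₁..ν₂, σa ν) * q
        - ((∫ ν in ν₁..ν₂, σa ν * κ ν) / (∫ ν in ν₁..ν₂, κ ν)) * r := by
  have hΔ : (ν₂ - ν₁) ≠ 0 := sub_ne_zero.mpr (ne_of_gt hν)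
  have hK : (∫ ν in ν₁..ν₂, κ ν) ≠ 0 := ne_of_gt hKpos
  set Bg := ∫ ν' in ν₁..ν₂, B ν' with hBg
  set K := ∫ ν' in ν₁..ν₂, κ ν' with hKdef
  have heq : Set.EqOn (fun ν => σa ν * (B ν - Irec ν))
      (fun ν => (ν₂ - ν₁)⁻¹ * ((σa ν * ω₂ ν) * Bg)
        - (ν₂ - ν₁)⁻¹ * ((σa ν * ω₁ ν) * ρg)
        - (ν₂ - ν₁)⁻¹ * (σa ν * q)
        - (σa ν * κ ν) * (r / K)) (Set.uIcc ν₁ ν₂) := by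
    intro ν _
    simp only [hIrec, hsρ, hsR]
    field_simp
    ring
  rw [intervalIntegral.integral_congr heq]
  have h1 : IntervalIntegrable (fun ν => (ν₂ - ν₁)⁻¹ * ((σa ν * ω₂ ν) * Bg)) volume ν₁ ν₂ := by
    exact ((hσaω₂.mul_const Bg).const_mul _)
  have h2 : IntervalIntegrable (fun ν => (ν₂ - ν₁)⁻¹ * ((σa ν * ω₁ ν) * ρg)) volume ν₁ ν₂ := by
    exact ((hσaω₁.mul_const ρg).const_mul _)
  have h3 : IntervalIntegrable (fun ν => (ν₂ - ν₁)⁻¹ * (σa ν * q)) volume ν₁ ν₂ := by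
    exact ((hσaInt.mul_const q).const_mul _)
  have h4 : IntervalIntegrable (fun ν => (σa ν * κ ν) * (r / K)) volume ν₁ ν₂ :=
    hσaκ.mul_const _
  rw [intervalIntegral.integral_sub ((h1.sub h2).sub h3) h4,
      intervalIntegral.integral_sub (h1.sub h2) h3,
      intervalIntegral.integral_sub h1 h2]
  simp only [intervalIntegral.integral_const_mul, intervalIntegral.integral_mul_const]
  have hc1 : (∫ ν in ν₁..ν₂, ω₂ ν * σa ν) = ∫ ν in ν₁..ν₂, σa ν * ω₂ ν := by
    congr 1; ext ν; ring
  have hc2 : (∫ ν in ν₁..ν₂, ω₁ ν * σa ν) = ∫ ν in ν₁..ν₂, σa ν * ω₁ ν := by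
    congr 1; ext ν; ring
  rw [hc1, hc2]
  field_simp
end

section
/- For every T > 0, the Planck function ν ↦ B(ν, T) is integrable on (0, ∞) and ∫₀^∞ B(ν, T) dν = (a_r c / (4π)) T⁴; equivalently 4π ∫₀^∞ B(ν, T) dν = a_r c T⁴, where a_r = 8π⁵k⁴/(15 h³ c³). -/
/-!
Expanding `1 / (e^{bx} - 1) = ∑_{n ≥ 0} e^{-(n+1)bx}` and integrating termwise against
`x^{s-1}` gives the Bose integral `∫₀^∞ x^{s-1} / (e^{bx} - 1) dx = Γ(s) ∑_{n ≥ 1} (nb)^{-s}`;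
termwise integration is legitimate since the terms are nonnegative with summable integrals.
The resulting value is positive, and a nonzero Bochner integral forces integrability.
For `s = 4`, `Γ(4) = 6` and `ζ(4) = π⁴/90`, and the Planck integral is the case `b = h/(kT)`.
-/

open MeasureTheory Real Set

lemma hasSum_exp_neg_succ_mul {x : ℝ} (hx : 0 < x) :
    HasSum (fun n : ℕ => exp (-((n + 1) * x))) (1 / (exp x - 1)) := by
  have hr : exp (-x) < 1 := exp_lt_one_iff.mpr (neg_lt_zero.mpr hx)
  have hgeo := (hasSum_geometric_of_lt_one (exp_pos (-x)).le hr).mul_left (exp (-x))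
  have hterm (n : ℕ) : exp (-((n + 1) * x)) = exp (-x) * exp (-x) ^ n := by
    rw [← exp_nat_mul, ← exp_add]
    ring_nf
  have hval : exp (-x) * (1 - exp (-x))⁻¹ = 1 / (exp x - 1) := by
    have : exp x - 1 ≠ 0 := (sub_pos.mpr (one_lt_exp_iff.mpr hx)).ne'
    rw [exp_neg]
    field_simp
  simpa only [hterm, hval] using hgeo

section BoseIntegral

variable {s b : ℝ}

lemma integral_rpow_mul_exp_neg_succ_mul (hs : 0 < s) (hb : 0 < b) (n : ℕ) :
    ∫ x in Ioi 0, x ^ (s - 1) * exp (-((n + 1) * (b * x))) = Gamma s / ((n + 1) * b) ^ s := by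
  simp_rw [← mul_assoc]
  rw [integral_rpow_mul_exp_neg_mul_Ioi hs (by positivity), div_rpow zero_le_one (by positivity),
    one_rpow, div_mul_eq_mul_div, one_mul]

lemma integrableOn_rpow_mul_exp_neg_succ_mul (hs : 0 < s) (hb : 0 < b) (n : ℕ) :
    IntegrableOn (fun x => x ^ (s - 1) * exp (-((n + 1) * (b * x)))) (Ioi 0) :=
  .of_integral_ne_zero <| by
    rw [integral_rpow_mul_exp_neg_succ_mul hs hb]
    exact (div_pos (Gamma_pos_of_pos hs) (by positivity)).ne'

lemma summable_gamma_div_succ_mul_rpow (hs : 1 < s) (hb : 0 < b) :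
    Summable fun n : ℕ => Gamma s / ((n + 1) * b) ^ s := by
  have hp : Summable fun n : ℕ => 1 / ((n + 1 : ℕ) : ℝ) ^ s :=
    (summable_nat_add_iff 1).mpr (summable_one_div_nat_rpow.mpr hs)
  refine (hp.mul_left (Gamma s / b ^ s)).congr fun n => ?_
  rw [mul_rpow (by positivity) hb.le]
  push_cast
  ring

theorem hasSum_integral_rpow_div_exp_mul_sub_one (hs : 1 < s) (hb : 0 < b) :
    HasSum (fun n : ℕ => Gamma s / ((n + 1) * b) ^ s)
      (∫ x in Ioi 0, x ^ (s - 1) / (exp (b * x) - 1)) := by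
  have hs₀ : 0 < s := zero_lt_one.trans hs
  have hnorm (n : ℕ) : ∫ x in Ioi 0, ‖x ^ (s - 1) * exp (-((n + 1) * (b * x)))‖ =
      Gamma s / ((n + 1) * b) ^ s := by
    rw [← integral_rpow_mul_exp_neg_succ_mul hs₀ hb]
    refine setIntegral_congr_fun measurableSet_Ioi fun x (hx : 0 < x) => ?_
    exact norm_of_nonneg (by positivity)
  have htsum : ∀ x ∈ Ioi (0 : ℝ),
      ∑' n : ℕ, x ^ (s - 1) * exp (-((n + 1) * (b * x))) = x ^ (s - 1) / (exp (b * x) - 1) :=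
    fun x (hx : 0 < x) => by
      rw [((hasSum_exp_neg_succ_mul (mul_pos hb hx)).mul_left (x ^ (s - 1))).tsum_eq, mul_one_div]
  have htermwise := hasSum_integral_of_summable_integral_norm
    (integrableOn_rpow_mul_exp_neg_succ_mul hs₀ hb)
    (by simpa only [hnorm] using summable_gamma_div_succ_mul_rpow hs hb)
  rwa [setIntegral_congr_fun measurableSet_Ioi htsum,
    funext (integral_rpow_mul_exp_neg_succ_mul hs₀ hb)] at htermwise

theorem integrableOn_rpow_div_exp_mul_sub_one (hs : 1 < s) (hb : 0 < b) :
    IntegrableOn (fun x => x ^ (s - 1) / (exp (b * x) - 1)) (Ioi 0) :=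
  .of_integral_ne_zero <| by
    rw [← (hasSum_integral_rpow_div_exp_mul_sub_one hs hb).tsum_eq]
    have := Gamma_pos_of_pos (zero_lt_one.trans hs)
    exact ((summable_gamma_div_succ_mul_rpow hs hb).tsum_pos (fun n => by positivity) 0
      (by positivity)).ne'

end BoseIntegral

lemma hasSum_one_div_succ_pow_four :
    HasSum (fun n : ℕ => 1 / ((n : ℝ) + 1) ^ 4) (π ^ 4 / 90) := by
  simpa using (hasSum_nat_add_iff' 1).mpr hasSum_zeta_four

theorem integral_pow_three_div_exp_mul_sub_one {b : ℝ} (hb : 0 < b) :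
    ∫ x in Ioi 0, x ^ 3 / (exp (b * x) - 1) = π ^ 4 / (15 * b ^ 4) := by
  have hΓ : Gamma 4 = 6 := by norm_num [Nat.factorial]
  have h := hasSum_integral_rpow_div_exp_mul_sub_one (s := 4) (by norm_num) hb
  simp only [hΓ, show (4 : ℝ) - 1 = 3 by norm_num, rpow_ofNat] at h
  have hzeta : HasSum (fun n : ℕ => 6 / ((n + 1) * b) ^ 4) (6 / b ^ 4 * (π ^ 4 / 90)) :=
    (hasSum_one_div_succ_pow_four.mul_left _).congr_fun fun n => by
      rw [mul_pow]
      field_simp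
  rw [h.unique hzeta]
  ring

theorem integrableOn_pow_three_div_exp_mul_sub_one {b : ℝ} (hb : 0 < b) :
    IntegrableOn (fun x => x ^ 3 / (exp (b * x) - 1)) (Ioi 0) := by
  simpa only [show (4 : ℝ) - 1 = 3 by norm_num, rpow_ofNat] using
    integrableOn_rpow_div_exp_mul_sub_one (s := 4) (by norm_num) hb

theorem planck_integral_general (h k c : ℝ) (hh : 0 < h) (hk : 0 < k) :
    ∀ T : ℝ, 0 < T →
      IntegrableOn
        (fun ν => 2 * h * ν ^ 3 / c ^ 2 * (1 / (Real.exp (h * ν / (k * T)) - 1)))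
        (Set.Ioi (0 : ℝ)) volume ∧
      (∫ ν in Set.Ioi (0 : ℝ),
          2 * h * ν ^ 3 / c ^ 2 * (1 / (Real.exp (h * ν / (k * T)) - 1)))
        = (8 * π ^ 5 * k ^ 4 / (15 * h ^ 3 * c ^ 3)) * c / (4 * π) * T ^ 4 ∧
      4 * π * (∫ ν in Set.Ioi (0 : ℝ),
          2 * h * ν ^ 3 / c ^ 2 * (1 / (Real.exp (h * ν / (k * T)) - 1)))
        = (8 * π ^ 5 * k ^ 4 / (15 * h ^ 3 * c ^ 3)) * c * T ^ 4 := by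
  intro T hT
  have hb : 0 < h / (k * T) := by positivity
  have hplanck : (fun ν => 2 * h * ν ^ 3 / c ^ 2 * (1 / (exp (h * ν / (k * T)) - 1))) =
      fun ν => 2 * h / c ^ 2 * (ν ^ 3 / (exp (h / (k * T) * ν) - 1)) := by
    funext ν
    rw [mul_div_right_comm h ν]
    ring
  have hval : ∫ ν in Ioi 0, 2 * h * ν ^ 3 / c ^ 2 * (1 / (exp (h * ν / (k * T)) - 1)) =
      8 * π ^ 5 * k ^ 4 / (15 * h ^ 3 * c ^ 3) * c / (4 * π) * T ^ 4 := by
    rw [hplanck, integral_const_mul, integral_pow_three_div_exp_mul_sub_one hb]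
    field_simp
    ring
  refine ⟨hplanck ▸ (integrableOn_pow_three_div_exp_mul_sub_one hb).const_mul _, hval, ?_⟩
  rw [hval]
  field_simp

/-- Stefan–Boltzmann: for every `T > 0`, the Planck function
`B(ν,T) = (2hν³/c²)/(exp(hν/(kT)) − 1)` is integrable on `(0,∞)` and
`∫₀^∞ B(ν,T) dν = (a_r c/(4π)) T⁴` with `a_r = 8π⁵k⁴/(15h³c³)`;
equivalently `4π ∫₀^∞ B dν = a_r c T⁴`. -/
theorem planck_integral (h k c : ℝ) (hh : 0 < h) (hk : 0 < k) (hc : 0 < c) :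
    ∀ T : ℝ, 0 < T →
      IntegrableOn
        (fun ν => 2 * h * ν ^ 3 / c ^ 2 * (1 / (Real.exp (h * ν / (k * T)) - 1)))
        (Set.Ioi (0 : ℝ)) volume ∧
      (∫ ν in Set.Ioi (0 : ℝ),
          2 * h * ν ^ 3 / c ^ 2 * (1 / (Real.exp (h * ν / (k * T)) - 1)))
        = (8 * π ^ 5 * k ^ 4 / (15 * h ^ 3 * c ^ 3)) * c / (4 * π) * T ^ 4 ∧
      4 * π * (∫ ν in Set.Ioi (0 : ℝ),
          2 * h * ν ^ 3 / c ^ 2 * (1 / (Real.exp (h * ν / (k * T)) - 1)))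
        = (8 * π ^ 5 * k ^ 4 / (15 * h ^ 3 * c ^ 3)) * c * T ^ 4 :=
  planck_integral_general h k c hh hk
end

section
/- For every T > 0, the function ν ↦ (2h²ν⁴/(c²kT²)) · exp(hν/(kT)) / (exp(hν/(kT)) − 1)² (which is the partial derivative of the Planck function with respect to T) is integrable on (0, ∞), and 4π ∫₀^∞ (2h²ν⁴/(c²kT²)) · exp(hν/(kT)) / (exp(hν/(kT)) − 1)² dν = 4 a_r c T³, where a_r = 8π⁵k⁴/(15 h³ c³). -/
/-!
The substitution `x = hν/(kT)` reduces the claim to `∫₀^∞ x⁴ eˣ/(eˣ - 1)² dx = 4π⁴/15`.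
Expanding `eˣ/(eˣ - 1)² = ∑_{n ≥ 1} n e^{-nx}` and integrating term by term (the terms are
nonnegative) gives `∑ n · 4!/n⁵ = 24 ζ(4) = 24 · π⁴/90`.
-/

open MeasureTheory Real Set

theorem hasSum_natCast_mul_exp_neg_mul {x : ℝ} (hx : 0 < x) :
    HasSum (fun n : ℕ => n * exp (-(n * x))) (exp x / (exp x - 1) ^ 2) := by
  have hr : ‖exp (-x)‖ < 1 := by
    rw [norm_of_nonneg (exp_pos _).le, exp_lt_one_iff]
    linarith
  have hsum_eq : exp (-x) / (1 - exp (-x)) ^ 2 = exp x / (exp x - 1) ^ 2 := by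
    rw [exp_neg]
    field_simp
  rw [← hsum_eq]
  refine (hasSum_coe_mul_geometric_of_norm_lt_one hr).congr_fun fun n => ?_
  rw [← exp_nat_mul, mul_neg]

theorem integral_pow_mul_exp_neg_mul_Ioi (m : ℕ) {a : ℝ} (ha : 0 < a) :
    ∫ x in Ioi (0 : ℝ), x ^ m * exp (-(a * x)) = m.factorial / a ^ (m + 1) := by
  have hgamma := integral_rpow_mul_exp_neg_mul_Ioi (a := m + 1) (by positivity) ha
  rw [Gamma_nat_eq_factorial, add_sub_cancel_right, div_rpow zero_le_one ha.le, one_rpow,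
    ← Nat.cast_add_one, rpow_natCast] at hgamma
  simp only [rpow_natCast] at hgamma
  rw [hgamma, one_div_mul_eq_div]

theorem integral_pow_mul_exp_div_exp_sub_one_sq {m : ℕ} {z : ℝ}
    (hz : HasSum (fun n : ℕ => 1 / (n : ℝ) ^ m) z) :
    ∫ x in Ioi (0 : ℝ), x ^ m * exp x / (exp x - 1) ^ 2 = m.factorial * z := by
  -- needed for the `n = 0` term: `1 / 0 ^ m = 0` holds only for `m ≠ 0`
  have hm : 1 < m := Real.summable_one_div_nat_pow.1 hz.summable
  set F : ℕ → ℝ → ℝ := fun n x => x ^ m * (n * exp (-(n * x)))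
  have hF : ∀ n, ∫ x in Ioi (0 : ℝ), F n x = m.factorial * (1 / (n : ℝ) ^ m) := by
    intro n
    rcases n.eq_zero_or_pos with rfl | hn
    · simp [F]
      omega
    have hn' : (0 : ℝ) < n := by exact_mod_cast hn
    simp only [F, mul_left_comm _ (n : ℝ), integral_const_mul,
      integral_pow_mul_exp_neg_mul_Ioi m hn']
    field_simp
    ring
  have hF_int : ∀ n, IntegrableOn (F n) (Ioi 0) := by
    intro n
    rcases n.eq_zero_or_pos with rfl | hn
    · simp [F]
    refine Integrable.of_integral_ne_zero ?_
    rw [hF]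
    have : (0 : ℝ) < n := by exact_mod_cast hn
    positivity
  have hF_norm : ∀ n, ∫ x in Ioi (0 : ℝ), ‖F n x‖ = ∫ x in Ioi (0 : ℝ), F n x := by
    intro n
    refine setIntegral_congr_fun measurableSet_Ioi fun x (hx : 0 < x) => ?_
    exact norm_of_nonneg (by positivity)
  have hsum := hasSum_integral_of_summable_integral_norm hF_int
    ((hz.mul_left _).summable.congr fun n => by rw [hF_norm, hF])
  rw [(hz.mul_left _).unique (hsum.congr_fun fun n => (hF n).symm)]
  refine setIntegral_congr_fun measurableSet_Ioi fun x (hx : 0 < x) => ?_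
  rw [((hasSum_natCast_mul_exp_neg_mul hx).mul_left (x ^ m)).tsum_eq, mul_div_assoc]

theorem integrableOn_pow_mul_exp_div_exp_sub_one_sq {m : ℕ} (hm : 1 < m) :
    IntegrableOn (fun x : ℝ => x ^ m * exp x / (exp x - 1) ^ 2) (Ioi 0) := by
  have hz := (Real.summable_one_div_nat_pow.2 hm).hasSum
  refine Integrable.of_integral_ne_zero ?_
  rw [integral_pow_mul_exp_div_exp_sub_one_sq hz]
  have : 1 ≤ ∑' n : ℕ, 1 / (n : ℝ) ^ m := by
    simpa using le_hasSum hz 1 fun n _ => by positivity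
  positivity

/-- For every `T > 0`, the temperature derivative of the Planck function,
`∂B/∂T = (2h²ν⁴/(c²kT²)) e^{hν/(kT)}/(e^{hν/(kT)} − 1)²`, is integrable on `(0,∞)` and
`4π ∫₀^∞ ∂B/∂T dν = 4 a_r c T³` with `a_r = 8π⁵k⁴/(15h³c³)`. -/
theorem planck_derivative_integral (h k c : ℝ) (hh : 0 < h) (hk : 0 < k) (hc : 0 < c) :
    ∀ T : ℝ, 0 < T →
      IntegrableOn
        (fun ν => 2 * h ^ 2 * ν ^ 4 / (c ^ 2 * k * T ^ 2) *
          Real.exp (h * ν / (k * T)) / (Real.exp (h * ν / (k * T)) - 1) ^ 2)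
        (Set.Ioi (0 : ℝ)) volume ∧
      4 * π * (∫ ν in Set.Ioi (0 : ℝ),
          2 * h ^ 2 * ν ^ 4 / (c ^ 2 * k * T ^ 2) *
            Real.exp (h * ν / (k * T)) / (Real.exp (h * ν / (k * T)) - 1) ^ 2)
        = 4 * (8 * π ^ 5 * k ^ 4 / (15 * h ^ 3 * c ^ 3)) * c * T ^ 3 := by
  intro T hT
  set P : ℝ → ℝ := fun x => x ^ 4 * exp x / (exp x - 1) ^ 2
  have ha : 0 < h / (k * T) := by positivity
  have hscale : (fun ν => 2 * h ^ 2 * ν ^ 4 / (c ^ 2 * k * T ^ 2) *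
      exp (h * ν / (k * T)) / (exp (h * ν / (k * T)) - 1) ^ 2)
        = fun ν => 2 * k ^ 3 * T ^ 2 / (c ^ 2 * h ^ 2) * P (h / (k * T) * ν) := by
    funext ν
    simp only [P, div_mul_eq_mul_div h, mul_div_assoc]
    field_simp
  have hP_int : IntegrableOn P (Ioi 0) := integrableOn_pow_mul_exp_div_exp_sub_one_sq (by norm_num)
  have hP_val : ∫ x in Ioi 0, P x = 4 * π ^ 4 / 15 := by
    rw [integral_pow_mul_exp_div_exp_sub_one_sq hasSum_zeta_four]
    norm_num [Nat.factorial]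
    ring
  rw [hscale]
  refine ⟨((integrableOn_Ioi_comp_mul_left_iff P 0 ha).2 (by simpa using hP_int)).const_mul _, ?_⟩
  rw [integral_const_mul, integral_comp_mul_left_Ioi P 0 ha, mul_zero, smul_eq_mul, hP_val]
  field_simp
  ring
end

section
/- The function x ↦ x³/(eˣ − 1) is integrable on (0, ∞) and ∫₀^∞ x³/(eˣ − 1) dx = π⁴/15. -/
/-!
Since `1 / (eˣ - 1) = ∑_{n ≥ 0} e^{-(n+1)x}` for `x > 0`, integrating term by term against
`x^{s-1}` gives `∑ Γ(s) / (n+1)^s = Γ(s) ζ(s)`; the interchange is justified because the terms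
are nonnegative with summable integrals when `s > 1`. At `s = 4` this is `3! · π⁴/90 = π⁴/15`.
Integrability comes from `eˣ - 1 = 2 e^{x/2} sinh (x/2) ≥ x e^{x/2}`.
-/

open MeasureTheory Real Set

namespace Real

theorem mul_exp_half_le_exp_sub_one {x : ℝ} (hx : 0 ≤ x) : x * exp (x / 2) ≤ exp x - 1 := by
  have hsinh : x ≤ exp (x / 2) - exp (-(x / 2)) := by
    have := self_le_sinh_iff.mpr (by linarith : 0 ≤ x / 2)
    rw [sinh_eq] at this
    linarith
  calc x * exp (x / 2) ≤ (exp (x / 2) - exp (-(x / 2))) * exp (x / 2) := by gcongr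
    _ = exp x - 1 := by
      rw [sub_mul, ← exp_add, ← exp_add, neg_add_cancel, exp_zero, add_halves]

theorem rpow_sub_one_div_exp_sub_one_le {s x : ℝ} (hx : 0 < x) :
    x ^ (s - 1) / (exp x - 1) ≤ x ^ (s - 2) * exp (-(1 / 2) * x) := by
  calc x ^ (s - 1) / (exp x - 1) ≤ x ^ (s - 1) / (x * exp (x / 2)) :=
        div_le_div_of_nonneg_left (by positivity) (by positivity)
          (mul_exp_half_le_exp_sub_one hx.le)
    _ = x ^ (s - 2) * exp (-(1 / 2) * x) := by
        rw [show s - 1 = s - 2 + 1 by ring, rpow_add_one hx.ne',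
          show -(1 / 2) * x = -(x / 2) by ring, exp_neg]
        field_simp

theorem integrableOn_rpow_sub_one_div_exp_sub_one {s : ℝ} (hs : 1 < s) :
    IntegrableOn (fun x ↦ x ^ (s - 1) / (exp x - 1)) (Ioi 0) := by
  have hdom : IntegrableOn (fun x ↦ x ^ (s - 2) * exp (-(1 / 2) * x)) (Ioi 0) := by
    simpa using integrableOn_rpow_mul_exp_neg_mul_rpow (p := 1) (by linarith) one_pos
      (one_half_pos (α := ℝ))
  refine hdom.mono' ?_ ((ae_restrict_iff' measurableSet_Ioi).mpr (.of_forall fun x hx ↦ ?_))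
  · exact (by fun_prop : Measurable fun x : ℝ ↦ x ^ (s - 1) / (exp x - 1)).aestronglyMeasurable
  · have hx : 0 < x := hx
    have : 0 < exp x - 1 := by linarith [add_one_lt_exp hx.ne']
    rw [norm_of_nonneg (by positivity)]
    exact rpow_sub_one_div_exp_sub_one_le hx

theorem hasSum_exp_neg_nat_succ_mul {x : ℝ} (hx : 0 < x) :
    HasSum (fun n : ℕ ↦ exp (-((n + 1) * x))) (exp x - 1)⁻¹ := by
  have hq : exp (-x) < 1 := exp_lt_one_iff.mpr (neg_neg_of_pos hx)
  have hterm (n : ℕ) : exp (-x) * exp (-x) ^ n = exp (-((n + 1) * x)) := by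
    rw [← exp_nat_mul, ← exp_add]
    ring_nf
  have hsum : exp (-x) * (1 - exp (-x))⁻¹ = (exp x - 1)⁻¹ := by
    have : exp x - 1 ≠ 0 := by linarith [add_one_lt_exp hx.ne']
    rw [exp_neg]
    field_simp
  simpa only [hterm, hsum] using (hasSum_geometric_of_lt_one (exp_pos _).le hq).mul_left (exp (-x))

theorem integrableOn_rpow_sub_one_mul_exp_neg_mul {s r : ℝ} (hs : 0 < s) (hr : 0 < r) :
    IntegrableOn (fun x ↦ x ^ (s - 1) * exp (-(r * x))) (Ioi 0) := by
  simpa using integrableOn_rpow_mul_exp_neg_mul_rpow (p := 1) (by linarith : -1 < s - 1) one_pos hr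

theorem hasSum_integral_rpow_sub_one_div_exp_sub_one {s : ℝ} (hs : 1 < s) :
    HasSum (fun n : ℕ ↦ Gamma s / (n + 1) ^ s) (∫ x in Ioi 0, x ^ (s - 1) / (exp x - 1)) := by
  set F : ℕ → ℝ → ℝ := fun n x ↦ x ^ (s - 1) * exp (-((n + 1) * x))
  have hF_int (n : ℕ) : IntegrableOn (F n) (Ioi 0) :=
    integrableOn_rpow_sub_one_mul_exp_neg_mul (by linarith) (by positivity)
  have hF_integral (n : ℕ) : ∫ x in Ioi 0, F n x = Gamma s / (n + 1) ^ s := by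
    rw [integral_rpow_mul_exp_neg_mul_Ioi (by linarith) (by positivity), one_div,
      inv_rpow (by positivity), inv_mul_eq_div]
  have hF_norm (n : ℕ) : ∫ x in Ioi 0, ‖F n x‖ = Gamma s / (n + 1) ^ s := by
    rw [← hF_integral]
    refine setIntegral_congr_fun measurableSet_Ioi fun x (hx : 0 < x) ↦ ?_
    exact norm_of_nonneg (by positivity)
  have hsummable : Summable fun n : ℕ ↦ Gamma s / (n + 1) ^ s := by
    refine (((summable_one_div_nat_add_rpow 1 s).mpr hs).mul_left (Gamma s)).congr fun n ↦ ?_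
    rw [abs_of_pos (by positivity), mul_one_div]
  have hseries : ∫ x in Ioi 0, ∑' n, F n x = ∫ x in Ioi 0, x ^ (s - 1) / (exp x - 1) := by
    refine setIntegral_congr_fun measurableSet_Ioi fun x (hx : 0 < x) ↦ ?_
    rw [div_eq_mul_inv, ← (hasSum_exp_neg_nat_succ_mul hx).tsum_eq, tsum_mul_left]
  rw [← hseries]
  simpa only [hF_integral] using
    hasSum_integral_of_summable_integral_norm hF_int (by simpa only [hF_norm] using hsummable)

end Real

theorem hasSum_one_div_nat_succ_pow_four :
    HasSum (fun n : ℕ ↦ 1 / ((n : ℝ) + 1) ^ 4) (π ^ 4 / 90) := by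
  simpa using (hasSum_nat_add_iff' 1).mpr hasSum_zeta_four

/-- The Bose integral: `x ↦ x³/(eˣ − 1)` is integrable on `(0,∞)` and
`∫₀^∞ x³/(eˣ − 1) dx = π⁴/15`. -/
theorem bose_integral :
    IntegrableOn (fun x : ℝ => x ^ 3 / (Real.exp x - 1)) (Set.Ioi (0 : ℝ)) volume ∧
    (∫ x in Set.Ioi (0 : ℝ), x ^ 3 / (Real.exp x - 1)) = π ^ 4 / 15 := by
  have hint := integrableOn_rpow_sub_one_div_exp_sub_one (s := 4) (by norm_num)
  have hsum := hasSum_integral_rpow_sub_one_div_exp_sub_one (s := 4) (by norm_num)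
  norm_num [Nat.factorial] at hint hsum
  refine ⟨hint, hsum.unique ?_⟩
  rw [show π ^ 4 / 15 = 6 * (π ^ 4 / 90) by ring]
  simpa only [mul_one_div] using hasSum_one_div_nat_succ_pow_four.mul_left 6
end

section
/- Let G ∈ ℕ, and let 𝒞, Δt, C_v, ℒ_a, 𝒫₀ be positive constants. For each g = 1, …, G let ρ_gⁿ, ρ_g^{n+1}, B_g^{n+1}, σ¹_{a,g}, σ²_{a,g} : ℝ³ → ℝ be functions, R_g^{n+1} : ℝ³ → ℝ³ a differentiable vector field, and Tⁿ, T^{n+1} : ℝ³ → ℝ. Suppose that at every point: (i) for each g, (1/𝒞)(ρ_g^{n+1} − ρ_gⁿ)/Δt + (1/3) div R_g^{n+1} = ℒ_a (σ²_{a,g} B_g^{n+1} − σ¹_{a,g} ρ_g^{n+1}); and (ii) (C_v/(𝒞𝒫₀)) (T^{n+1} − Tⁿ)/Δt = Σ_{g=1}^{G} 4π ℒ_a (σ¹_{a,g} ρ_g^{n+1} − σ²_{a,g} B_g^{n+1}). Then at every point the semi-discrete total energy balance holds: (4π𝒫₀/𝒞) Σ_{g=1}^{G} (ρ_g^{n+1}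 − ρ_gⁿ)/Δt + (4π𝒫₀/3) Σ_{g=1}^{G} div R_g^{n+1} + (C_v/𝒞)(T^{n+1} − Tⁿ)/Δt = 0. -/
open Real

/-- The divergence of a vector field on `ℝ³`. -/
noncomputable def div3 (R : EuclideanSpace ℝ (Fin 3) → EuclideanSpace ℝ (Fin 3))
    (x : EuclideanSpace ℝ (Fin 3)) : ℝ :=
  ∑ i : Fin 3, fderiv ℝ R x (EuclideanSpace.single i 1) i

/-- Exact conservation of the semi-discrete macroscopic system of the decomposed
multi-group AP scheme: summing the group zeroth-moment updates (multiplied by `4π𝒫₀`)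
and the temperature update yields the total energy balance. -/
theorem semi_discrete_energy_balance
    (G : ℕ) (𝒞 Δt Cv ℒa 𝒫₀ : ℝ)
    (h𝒞 : 0 < 𝒞) (hΔt : 0 < Δt) (hCv : 0 < Cv) (hℒa : 0 < ℒa) (h𝒫₀ : 0 < 𝒫₀)
    (ρn ρnp1 Bnp1 σ1 σ2 : Fin G → EuclideanSpace ℝ (Fin 3) → ℝ)
    (R : Fin G → EuclideanSpace ℝ (Fin 3) → EuclideanSpace ℝ (Fin 3))
    (hRdiff : ∀ g, Differentiable ℝ (R g))
    (Tn Tnp1 : EuclideanSpace ℝ (Fin 3) → ℝ)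
    (hmoment : ∀ g, ∀ x,
      (1 / 𝒞) * (ρnp1 g x - ρn g x) / Δt + (1 / 3) * div3 (R g) x
        = ℒa * (σ2 g x * Bnp1 g x - σ1 g x * ρnp1 g x))
    (htemp : ∀ x,
      (Cv / (𝒞 * 𝒫₀)) * (Tnp1 x - Tn x) / Δt
        = ∑ g : Fin G, 4 * π * ℒa * (σ1 g x * ρnp1 g x - σ2 g x * Bnp1 g x)) :
    ∀ x,
      (4 * π * 𝒫₀ / 𝒞) * (∑ g : Fin G, (ρnp1 g x - ρn g x) / Δt)
        + (4 * π * 𝒫₀ / 3) * (∑ g : Fin G, div3 (R g) x)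
        + (Cv / 𝒞) * (Tnp1 x - Tn x) / Δt = 0 := by
  intro x
  have h2 := htemp x
  have h3 : (Cv / 𝒞) * (Tnp1 x - Tn x) / Δt
      = 𝒫₀ * ∑ g : Fin G, 4 * π * ℒa * (σ1 g x * ρnp1 g x - σ2 g x * Bnp1 g x) := by
    rw [← h2]; field_simp
  have h1 : (4 * π * 𝒫₀ / 𝒞) * (∑ g : Fin G, (ρnp1 g x - ρn g x) / Δt)
        + (4 * π * 𝒫₀ / 3) * (∑ g : Fin G, div3 (R g) x)
      = ∑ g : Fin G, (4 * π * 𝒫₀) * (ℒa * (σ2 g x * Bnp1 g x - σ1 g x * ρnp1 g x)) := by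
    rw [Finset.mul_sum, Finset.mul_sum, ← Finset.sum_add_distrib]
    refine Finset.sum_congr rfl fun g _ => ?_
    have := hmoment g x
    linear_combination (4 * π * 𝒫₀) * this
  rw [h3, h1, Finset.mul_sum, ← Finset.sum_add_distrib]
  apply Finset.sum_eq_zero
  intro g _
  ring
end

section
/- Let G, N_x ∈ ℕ and let 𝒞, Δt, Δx, C_v, ℒ_a, 𝒫₀ be positive constants. For indices g = 1, …, G and i = 1, …, N_x let ρ_{g,i+1/2}ⁿ, ρ_{g,i+1/2}^{n+1}, B_{g,i+1/2}^{n+1}, σ¹_{a,g,i+1/2}, σ²_{a,g,i+1/2}, T_{i+1/2}ⁿ, T_{i+1/2}^{n+1} ∈ ℝ and R_{g,i}^{n+1}, R_{g,i+1}^{n+1} ∈ ℝ. Suppose for each i: (i) for every g, (1/𝒞)(ρ_{g,i+1/2}^{n+1} − ρ_{g,i+1/2}ⁿ)/Δt + (R_{g,i+1}^{n+1} − R_{g,i}^{n+1})/(3Δx) = ℒ_a(σ²_{a,g,i+1/2} B_{g,i+1/2}^{n+1} − σ¹_{a,g,i+1/2} ρ_{g,i+1/2}^{n+1}); and (ii)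 (C_v/(𝒞𝒫₀))(T_{i+1/2}^{n+1} − T_{i+1/2}ⁿ)/Δt = Σ_{g=1}^{G} 4πℒ_a(σ¹_{a,g,i+1/2} ρ_{g,i+1/2}^{n+1} − σ²_{a,g,i+1/2} B_{g,i+1/2}^{n+1}). Then for each i the fully discrete energy balance holds: (4π/𝒞) Σ_{g=1}^{G} (ρ_{g,i+1/2}^{n+1} − ρ_{g,i+1/2}ⁿ)/Δt + (4π/(3Δx)) Σ_{g=1}^{G} (R_{g,i+1}^{n+1} − R_{g,i}^{n+1}) + (C_v/(𝒞𝒫₀))(T_{i+1/2}^{n+1} − T_{i+1/2}ⁿ)/Δt = 0. -/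
open Real

/-- Exact discrete conservation of the fully discrete macroscopic system of the
decomposed multi-group AP scheme in one space dimension: for each cell `i`, summing
the group zeroth-moment updates and the temperature update gives the discrete
energy balance. -/
theorem fully_discrete_energy_balance
    (G Nx : ℕ) (𝒞 Δt Δx Cv ℒa 𝒫₀ : ℝ)
    (h𝒞 : 0 < 𝒞) (hΔt : 0 < Δt) (hΔx : 0 < Δx) (hCv : 0 < Cv)
    (hℒa : 0 < ℒa) (h𝒫₀ : 0 < 𝒫₀)
    (ρn ρnp1 Bnp1 σ1 σ2 : Fin G → ℕ → ℝ)
    (Rnp1 : Fin G → ℕ → ℝ)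
    (Tn Tnp1 : ℕ → ℝ)
    (hmoment : ∀ i, 1 ≤ i → i ≤ Nx → ∀ g : Fin G,
      (1 / 𝒞) * (ρnp1 g i - ρn g i) / Δt + (Rnp1 g (i + 1) - Rnp1 g i) / (3 * Δx)
        = ℒa * (σ2 g i * Bnp1 g i - σ1 g i * ρnp1 g i))
    (htemp : ∀ i, 1 ≤ i → i ≤ Nx →
      (Cv / (𝒞 * 𝒫₀)) * (Tnp1 i - Tn i) / Δt
        = ∑ g : Fin G, 4 * π * ℒa * (σ1 g i * ρnp1 g i - σ2 g i * Bnp1 g i)) :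
    ∀ i, 1 ≤ i → i ≤ Nx →
      (4 * π / 𝒞) * (∑ g : Fin G, (ρnp1 g i - ρn g i) / Δt)
        + (4 * π / (3 * Δx)) * (∑ g : Fin G, (Rnp1 g (i + 1) - Rnp1 g i))
        + (Cv / (𝒞 * 𝒫₀)) * (Tnp1 i - Tn i) / Δt = 0 := by
  intro i h1 h2
  have key : ∑ g : Fin G, (4 * π) * ((1 / 𝒞) * (ρnp1 g i - ρn g i) / Δt
      + (Rnp1 g (i + 1) - Rnp1 g i) / (3 * Δx))
      = ∑ g : Fin G, 4 * π * ℒa * (σ2 g i * Bnp1 g i - σ1 g i * ρnp1 g i) := by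
    refine Finset.sum_congr rfl fun g _ => ?_
    rw [hmoment i h1 h2 g]; ring
  have ht := htemp i h1 h2
  have hsum : (∑ g : Fin G, 4 * π * ℒa * (σ1 g i * ρnp1 g i - σ2 g i * Bnp1 g i))
      = - ∑ g : Fin G, 4 * π * ℒa * (σ2 g i * Bnp1 g i - σ1 g i * ρnp1 g i) := by
    rw [← Finset.sum_neg_distrib]
    exact Finset.sum_congr rfl fun g _ => by ring
  rw [ht, hsum, ← key]
  rw [Finset.mul_sum, Finset.mul_sum, ← Finset.sum_neg_distrib,
    ← Finset.sum_add_distrib, ← Finset.sum_add_distrib]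
  exact Finset.sum_eq_zero fun g _ => by ring
end
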